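/- arXiv:1502.02167 — 2 statements merged into one kernel-verified Lean document; each statement's English description precedes it below -/
import Mathlib

section
/- Let k be a field, K a field extension of k, and H a group acting on K by field automorphisms fixing k. Suppose χ : H → kˣ is a group homomorphism, and t ∈ K is a nonzero element with h · t = χ(h) · t for all h ∈ H. If χ has infinite order (i.e., the powers χ^n for n ≥ 0 are pairwise distinct as homomorphisms H → Kˣ), then t is transcendental over the fixed field K^H. -/
/-- If `χ : H → kˣ` has infinite order and `t ≠ 0` satisfies `h • t = χ(h) t`,
then `t` is transcendental over the fixed field `K^H`. -/
theorem stmt0 {k K H : Type*} [Field k] [Field K] [Algebra k K] [Group H]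
    [MulSemiringAction H K]
    (hfix : ∀ (h : H) (c : k), h • (algebraMap k K c) = algebraMap k K c)
    (χ : H →* kˣ) (t : K) (ht : t ≠ 0)
    (hwt : ∀ h : H, h • t = algebraMap k K (χ h : k) * t)
    (hord : ∀ m n : ℕ,
      ((Units.map (algebraMap k K).toMonoidHom).comp χ) ^ m =
        ((Units.map (algebraMap k K).toMonoidHom).comp χ) ^ n → m = n) :
    Transcendental (FixedPoints.subfield H K) t := by
  set φ : ℕ → (H →* K) := fun n =>
    (Units.coeHom K).comp (((Units.map (algebraMap k K).toMonoidHom).comp χ) ^ n) with hφ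
  have hφapp : ∀ n h, φ n h = (algebraMap k K (χ h : k)) ^ n := by
    intro n h
    simp [hφ]
  have hφinj : Function.Injective φ := by
    intro m n hmn
    apply hord
    ext h
    have := DFunLike.congr_fun hmn h
    simpa [hφ] using this
  intro halg
  obtain ⟨p, hp0, hpt⟩ := halg
  set q := p.map (algebraMap (FixedPoints.subfield H K) K) with hq
  have hq0 : q ≠ 0 := by
    rw [hq, Ne, Polynomial.map_eq_zero_iff (algebraMap (FixedPoints.subfield H K) K).injective]
    exact hp0
  have hqt : q.eval t = 0 := by
    rw [hq, Polynomial.eval_map]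
    exact hpt
  have hcoefffix : ∀ (h : H) (n : ℕ), h • q.coeff n = q.coeff n := by
    intro h n
    rw [hq, Polynomial.coeff_map]
    exact (p.coeff n).prop h
  have key : ∑ n ∈ q.support, (q.coeff n * t ^ n) • ((φ n : H → K)) = 0 := by
    funext h
    have h1 : MulSemiringAction.toRingHom H K h (q.eval t) = 0 := by
      rw [hqt]; exact map_zero _
    rw [Polynomial.eval_eq_sum, Polynomial.sum_def, map_sum] at h1
    have h2 : ∀ n ∈ q.support,
        MulSemiringAction.toRingHom H K h (q.coeff n * t ^ n)
          = (q.coeff n * t ^ n) * φ n h := by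
      intro n _
      show h • (q.coeff n * t ^ n) = _
      rw [smul_mul', hcoefffix, smul_pow', hwt, mul_pow, hφapp]
      ring
    rw [Finset.sum_congr rfl h2] at h1
    simpa [Finset.sum_apply, mul_comm] using h1
  have li := (linearIndependent_monoidHom H K).comp φ hφinj
  rw [linearIndependent_iff'] at li
  have hzero := li q.support (fun n => q.coeff n * t ^ n) key
  apply hq0
  ext n
  by_cases hn : n ∈ q.support
  · have := hzero n hn
    rcases mul_eq_zero.mp this with h0 | h0
    · simpa using h0
    · exact absurd h0 (pow_ne_zero n ht)
  · simpa using Polynomial.notMem_support_iff.mp hn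
end

section
/- Let G be a group acting on a field K by field automorphisms, χ : G → Kˣ a homomorphism, n ∈ ℤ with n ≠ 0, and set K_s = {f ∈ K : g·f = χ(g)^s f}. Suppose t ∈ K_n is nonzero, t is transcendental over F := K_0 = K^G, and K is generated as a field by the union of the K_{na} for a ∈ ℤ. Then K = F(t), and in particular K is a purely transcendental extension of the fixed field of transcendence degree 1. -/
/-- If `t` is a nonzero semi-invariant of weight `n ≠ 0`, transcendental over
the fixed field `F = K^G`, and `K` is generated as a field by the
semi-invariants of weights `n·a` (`a ∈ ℤ`), then `K = F(t)`. -/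
theorem stmt8 {K G : Type*} [Field K] [Group G] [MulSemiringAction G K]
    (χ : G →* Kˣ) (n : ℤ) (hn : n ≠ 0) (t : K) (ht : t ≠ 0)
    (hwt : ∀ g : G, g • t = ((χ g ^ n : Kˣ) : K) * t)
    (htr : Transcendental (FixedPoints.subfield G K) t)
    (hgen : Subfield.closure
      (⋃ a : ℤ, {f : K | ∀ g : G, g • f = ((χ g ^ (n * a) : Kˣ) : K) * f}) = ⊤) :
    Subfield.closure ((FixedPoints.subfield G K : Set K) ∪ {t}) = ⊤ := by
  set L := Subfield.closure ((FixedPoints.subfield G K : Set K) ∪ {t}) with hL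
  have htL : t ∈ L := Subfield.subset_closure (Or.inr rfl)
  rw [eq_top_iff, ← hgen]
  refine Subfield.closure_le.mpr ?_
  rintro f hf
  obtain ⟨a, hfa⟩ := Set.mem_iUnion.mp hf
  -- g • (t ^ a) = χ g ^ (n * a) * t ^ a
  have hsmul_zpow : ∀ (g : G), g • (t ^ a) = ((χ g ^ (n * a) : Kˣ) : K) * t ^ a := by
    intro g
    have : g • (t ^ a) = (g • t) ^ a := map_zpow₀ (MulSemiringAction.toRingEquiv G K g) t a
    rw [this, hwt g, mul_zpow, ← Units.val_zpow_eq_zpow_val, ← zpow_mul]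
  have hta : t ^ a ≠ 0 := zpow_ne_zero a ht
  have hfix : f / t ^ a ∈ FixedPoints.subfield G K := by
    intro g
    have hdiv : g • (f / t ^ a) = (g • f) / (g • (t ^ a)) := map_div₀ (MulSemiringAction.toRingEquiv G K g) f (t ^ a)
    rw [hdiv, hfa g, hsmul_zpow g, mul_div_mul_left]
    exact Units.ne_zero _
  have htaL : t ^ a ∈ L := Subfield.zpow_mem L htL a
  have hfL : f / t ^ a ∈ L := Subfield.subset_closure (Or.inl hfix)
  have : (f / t ^ a) * t ^ a ∈ L := Subfield.mul_mem L hfL htaL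
  rwa [div_mul_cancel₀ f hta] at this
end
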